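/- Let S be a finite semigroup, let 𝒞 be the set of transformations f of the set of L-chains over S of the form f(x⃗) = x⃗·f̂ concatenated with a fixed nonempty L-chain f̄, where f̂ lies in the self-similar monoid Š₀^∞ of 'R-decreasing, L-preserving, pairwise-multiplier' sequential functions. Then 𝒞 is closed under composition, with (f∘g)^ = f̂ ∘ (_{f̄} ĝ) and (f∘g)‾ = ĝ-image of f̄ concatenated with ḡ; moreover for L-chains a⃗, b⃗ with b⃗·a⃗ an L-chain, (b⃗·a⃗)f = b⃗·(_{a⃗} f̂) · (a⃗ f). -/
import Mathlib


open Pointwise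

/-- Multiplication of an element of a semigroup `M` by an element of `M¹ = M` with an
adjoined identity (modelled as `Option M`, `none` being the identity `I`). -/
def hmul {M : Type*} [Mul M] (h : M) : Option M → M := fun s => s.elim h (fun u => h * u)

/-- Multiplication in `M¹` (modelled as `Option M`). -/
def omul {M : Type*} [Mul M] : Option M → Option M → Option M
  | none, t => t
  | some a, none => some a
  | some a, some b => some (a * b)

/-- `mpow a n = aⁿ` for `n ≥ 1` (with the junk value `mpow a 0 = a`). -/
def mpow {M : Type*} [Mul M] (a : M) : ℕ → M
  | 0 => a
  | 1 => a
  | n+2 => mpow a (n+1) * a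

/-- Green's preorder `a ≤_L b` iff `a ∈ M¹ b`. -/
def leL {M : Type*} [Mul M] (a b : M) : Prop := a = b ∨ ∃ u, a = u * b
/-- Green's preorder `a ≤_R b` iff `a ∈ b M¹`. -/
def leR {M : Type*} [Mul M] (a b : M) : Prop := a = b ∨ ∃ u, a = b * u
/-- Green's `L`-equivalence. -/
def eqL {M : Type*} [Mul M] (a b : M) : Prop := leL a b ∧ leL b a
/-- Green's `R`-equivalence. -/
def eqR {M : Type*} [Mul M] (a b : M) : Prop := leR a b ∧ leR b a
/-- Green's `H`-equivalence. -/
def eqH {M : Type*} [Mul M] (a b : M) : Prop := eqL a b ∧ eqR a b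
/-- `a <_H b` : `a ≤_L b`, `a ≤_R b`, but `a` is not `H`-equivalent to `b`. -/
def ltH {M : Type*} [Mul M] (a b : M) : Prop := leL a b ∧ leR a b ∧ ¬ eqH a b

/-- The `H`-class of `a`, as a type. -/
def HclsT {M : Type*} [Mul M] (a : M) := {x : M // eqH x a}

/-- The (right) Schützenberger group of the `H`-class of `a`: the set of transformations of the
`H`-class of `a` induced by right multiplication by elements of the right stabilizer in `M¹`. -/
def gammaR {M : Type*} [Mul M] (a : M) : Set (HclsT a → HclsT a) :=
  {f | ∃ s : Option M, (∀ h : HclsT a, eqH (hmul h.1 s) a) ∧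
        ∀ h : HclsT a, (f h).1 = hmul h.1 s}

/-- An element is `π'`-free if the Schützenberger group of its (`J`-class, equivalently its)
`H`-class is a `π`-group: every prime dividing its order lies in `π`. -/
def piFree {M : Type*} [Mul M] (π : Set ℕ) (a : M) : Prop :=
  ∀ p : ℕ, p.Prime → p ∣ (gammaR a).ncard → p ∈ π

/-- The monoid `Š` of functions `f : S → S` (written on the right, composed left to right)
such that `f(s) ≤_R s`, `f` preserves `L`-equivalence, and there is a right multiplier
`s_f ∈ S¹` with `f(s) R s → f(s) = s·s_f`. -/
def Scheck (S : Type*) [Semigroup S] : Set (S → S) :=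
  {f | (∀ s, leR (f s) s) ∧ (∀ s s', eqL s s' → eqL (f s) (f s')) ∧
       ∃ sf : Option S, ∀ s, eqR (f s) s → f s = hmul s sf}

/-- Strings `(x_n, …, x_1)` over `S` are encoded as lists `[x_1, …, x_n]` read first letter
first; concatenation of strings `b⃗·a⃗` is the list `a ++ b`.  The section (state) `_a F` of a
sequential function `F` at the word `a`. -/
def sect {S : Type*} (F : List S → List S) (a : List S) : List S → List S :=
  fun b => (F (a ++ b)).drop a.length

/-- Membership in the action monoid of the infinite iterated wreath product `≀^∞ (S, Š)`:
`F` is length-preserving, sequential (prefix-compatible), and each letter is transformed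
according to an element of `Š` (the wreath recursion). -/
def InWr {S : Type*} [Semigroup S] (F : List S → List S) : Prop :=
  (∀ l, (F l).length = l.length) ∧
  (∀ a b : List S, ∃ c, F (a ++ b) = F a ++ c) ∧
  (∀ a : List S, ∃ f ∈ Scheck S, ∀ s : S, sect F a [s] = [f s])

/-- The defining condition of `Š₀^∞`: whenever the top two letters `x_{n-1}, x_n` (the last two
entries of the list) are `R`-equivalent to their images, a single element `s ∈ S¹` realizes
both as right translations. -/
def Zeiger0 {S : Type*} [Semigroup S] (F : List S → List S) : Prop :=
  ∀ (t t' : List S) (xm xn ym yn : S), F (t ++ [xm, xn]) = t' ++ [ym, yn] →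
    t'.length = t.length → eqR xm ym → eqR xn yn →
    ∃ s : Option S, hmul xm s = ym ∧ hmul xn s = yn

/-- The submonoid `Š₀^∞` of the infinite iterated wreath product. -/
def Swr0 (S : Type*) [Semigroup S] : Set (List S → List S) :=
  {F | InWr F ∧ Zeiger0 F}

/-- An `L`-chain `(s_n, …, s_1)` (with `s_{i+1} ≤_L s_i`), encoded as the list
`[s_1, s_2, …, s_n]` whose head is the first (rightmost) letter. -/
def isChain {S : Type*} [Mul S] (l : List S) : Prop := List.Chain' (fun a b => leL b a) l

/-- A flag: a strict `L`-chain. -/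
def isFlag {S : Type*} [Mul S] (l : List S) : Prop :=
  List.Chain' (fun a b => leL b a ∧ ¬ leL a b) l

/-- Elementary reduction `(…, s', s, …) → (…, s', …)` when `s' L s`: delete the earlier-read
entry `s` of two adjacent `L`-equivalent entries, keeping `s'`. -/
def rstep {S : Type*} [Mul S] (l l' : List S) : Prop :=
  ∃ (l₁ : List S) (s s' : S) (l₂ : List S),
    eqL s' s ∧ l = l₁ ++ s :: s' :: l₂ ∧ l' = l₁ ++ s' :: l₂

/-- The semigroup `𝒞`: transformations of `L`-chains of the form `x⃗ ↦ x⃗f̂ · f̄` with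
`f̂ ∈ Š₀^∞` and `f̄` a fixed nonempty `L`-chain (in the list encoding, head = first-read
letter, `F l = f̄ ++ f̂(l)`), mapping `L`-chains to `L`-chains. -/
def Ccal (S : Type*) [Semigroup S] : Set (List S → List S) :=
  {F | ∃ Fh ∈ Swr0 S, ∃ fb : List S, fb ≠ [] ∧ isChain fb ∧
        (∀ l, F l = fb ++ Fh l) ∧ ∀ l, isChain l → isChain (F l)}

section Aux

variable {S : Type*} [Semigroup S]

lemma leR_trans' {a b c : S} (h1 : leR a b) (h2 : leR b c) : leR a c := by
  rcases h1 with rfl | ⟨u, rfl⟩ <;> rcases h2 with rfl | ⟨v, rfl⟩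
  · exact Or.inl rfl
  · exact Or.inr ⟨v, rfl⟩
  · exact Or.inr ⟨u, rfl⟩
  · exact Or.inr ⟨v * u, mul_assoc _ _ _⟩

lemma hmul_omul' (x : S) (a b : Option S) :
    hmul (hmul x a) b = hmul x (omul a b) := by
  cases a <;> cases b <;> simp [hmul, omul, mul_assoc]

lemma Scheck_comp {f g : S → S} (hf : f ∈ Scheck S) (hg : g ∈ Scheck S) :
    (fun s => g (f s)) ∈ Scheck S := by
  obtain ⟨hf1, hf2, sf, hf3⟩ := hf
  obtain ⟨hg1, hg2, sg, hg3⟩ := hg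
  refine ⟨fun s => leR_trans' (hg1 (f s)) (hf1 s),
    fun s s' h => hg2 _ _ (hf2 _ _ h), omul sf sg, fun s hs => ?_⟩
  have h1 : leR (f s) s := hf1 s
  have h2 : leR s (f s) := leR_trans' hs.2 (hg1 (f s))
  have h3 : eqR (f s) s := ⟨h1, h2⟩
  have h4 : eqR (g (f s)) (f s) := ⟨hg1 (f s), leR_trans' h1 hs.2⟩
  show g (f s) = hmul s (omul sf sg)
  rw [← hmul_omul', ← hf3 s h3, hg3 (f s) h4]

lemma app_sect {F : List S → List S} (hF : InWr F) (a b : List S) :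
    F (a ++ b) = F a ++ sect F a b := by
  obtain ⟨c, hc⟩ := hF.2.1 a b
  have h : sect F a b = c := by
    show (F (a ++ b)).drop a.length = c
    rw [hc, ← hF.1 a, List.drop_left]
  rw [h, hc]

lemma sect_len {F : List S → List S} (hF : InWr F) (a b : List S) :
    (sect F a b).length = b.length := by
  show ((F (a ++ b)).drop a.length).length = b.length
  rw [List.length_drop, hF.1, List.length_append]
  omega

lemma sect_append {F : List S → List S} (hF : InWr F) (a b c : List S) :
    sect F a (b ++ c) = sect F a b ++ sect F (a ++ b) c := by
  have h1 : F a ++ sect F a (b ++ c) = (F a ++ sect F a b) ++ sect F (a ++ b) c := by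
    rw [← app_sect hF a b, ← app_sect hF (a ++ b) c, ← app_sect hF a (b ++ c),
      List.append_assoc]
  rw [List.append_assoc] at h1
  exact List.append_cancel_left h1

lemma sect_sect {F : List S → List S} (hF : InWr F) (a b c : List S) :
    sect (sect F a) b c = sect F (a ++ b) c := by
  show (((F (a ++ (b ++ c))).drop a.length).drop b.length) = (F ((a ++ b) ++ c)).drop (a ++ b).length
  rw [List.drop_drop, ← List.append_assoc, List.length_append]
  try (congr 1; omega)

lemma inWr_sect {F : List S → List S} (hF : InWr F) (a : List S) : InWr (sect F a) := by
  refine ⟨fun l => sect_len hF a l,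
    fun b c => ⟨sect F (a ++ b) c, sect_append hF a b c⟩, fun b => ?_⟩
  obtain ⟨f, hf, hsec⟩ := hF.2.2 (a ++ b)
  exact ⟨f, hf, fun s => by rw [sect_sect hF a b [s]]; exact hsec s⟩

lemma zeiger_sect {F : List S → List S} (hF : InWr F) (hZ : Zeiger0 F) (a : List S) :
    Zeiger0 (sect F a) := by
  intro t t' xm xn ym yn h ht hm hn
  rw [sect_append hF a t [xm, xn]] at h
  have hl1 : (sect F a t).length = t'.length := by rw [sect_len hF, ht]
  obtain ⟨e1, e2⟩ := List.append_inj h hl1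
  have h2 : F ((a ++ t) ++ [xm, xn]) = F (a ++ t) ++ [ym, yn] := by
    rw [app_sect hF (a ++ t) [xm, xn], e2]
  exact hZ (a ++ t) (F (a ++ t)) xm xn ym yn h2 (hF.1 (a ++ t)) hm hn

lemma letter_step {F : List S → List S} (hF : InWr F) (a : List S) :
    ∃ f ∈ Scheck S, ∀ s, F (a ++ [s]) = F a ++ [f s] := by
  obtain ⟨f, hf, hsec⟩ := hF.2.2 a
  exact ⟨f, hf, fun s => by rw [app_sect hF a [s], hsec s]⟩

lemma inWr_comp {F G : List S → List S} (hF : InWr F) (hG : InWr G) :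
    InWr (fun l => G (F l)) := by
  refine ⟨fun l => by simp only []; rw [hG.1, hF.1],
    fun a b => ⟨sect G (F a) (sect F a b), ?_⟩, fun a => ?_⟩
  · show G (F (a ++ b)) = G (F a) ++ sect G (F a) (sect F a b)
    rw [app_sect hF a b, app_sect hG (F a) (sect F a b)]
  · obtain ⟨f, hf, hfs⟩ := letter_step hF a
    obtain ⟨g, hg, hgs⟩ := letter_step hG (F a)
    refine ⟨fun s => g (f s), Scheck_comp hf hg, fun s => ?_⟩
    show (G (F (a ++ [s]))).drop a.length = [g (f s)]
    rw [hfs s, hgs (f s)]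
    have h : a.length = (G (F a)).length := by rw [hG.1, hF.1]
    rw [h, List.drop_left]

lemma zeiger_comp {F G : List S → List S} (hF : InWr F) (hG : InWr G)
    (zF : Zeiger0 F) (zG : Zeiger0 G) : Zeiger0 (fun l => G (F l)) := by
  intro t t' xm xn ym yn h ht hm hn
  obtain ⟨f, hf, hfs⟩ := letter_step hF t
  obtain ⟨f', hf', hfs'⟩ := letter_step hF (t ++ [xm])
  set am := f xm with ham
  set an := f' xn with han
  have hFx : F (t ++ [xm, xn]) = F t ++ [am, an] := by
    have e1 : t ++ [xm, xn] = (t ++ [xm]) ++ [xn] := by simp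
    rw [e1, hfs' xn, hfs xm, List.append_assoc]
    rfl
  obtain ⟨g, hg, hgs⟩ := letter_step hG (F t)
  obtain ⟨g', hg', hgs'⟩ := letter_step hG (F t ++ [am])
  have hGx : G (F t ++ [am, an]) = G (F t) ++ [g am, g' an] := by
    have e1 : F t ++ [am, an] = (F t ++ [am]) ++ [an] := by simp
    rw [e1, hgs' an, hgs am, List.append_assoc]
    rfl
  have h' : G (F (t ++ [xm, xn])) = t' ++ [ym, yn] := h
  rw [hFx, hGx] at h'
  have hl : (G (F t)).length = t'.length := by rw [hG.1, hF.1, ht]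
  obtain ⟨e1, e2⟩ := List.append_inj h'.symm hl.symm
  have eym : g am = ym := by
    have := e2.symm
    simp only [List.cons.injEq] at this
    exact this.1
  have eyn : g' an = yn := by
    have := e2.symm
    simp only [List.cons.injEq] at this
    exact this.2.1
  have lam : leR am xm := hf.1 xm
  have lan : leR an xn := hf'.1 xn
  have lym : leR ym am := by rw [← eym]; exact hg.1 am
  have lyn : leR yn an := by rw [← eyn]; exact hg'.1 an
  have exm : eqR xm am := ⟨leR_trans' hm.1 lym, lam⟩
  have exn : eqR xn an := ⟨leR_trans' hn.1 lyn, lan⟩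
  have eam : eqR am ym := ⟨leR_trans' lam hm.1, lym⟩
  have ean : eqR an yn := ⟨leR_trans' lan hn.1, lyn⟩
  obtain ⟨s₁, e1m, e1n⟩ := zF t (F t) xm xn am an hFx (hF.1 t) exm exn
  have hGx' : G (F t ++ [am, an]) = t' ++ [ym, yn] := by rw [hGx, e1, eym, eyn]
  obtain ⟨s₂, e2m, e2n⟩ := zG (F t) t' am an ym yn hGx' (ht.trans (hF.1 t).symm) eam ean
  exact ⟨omul s₁ s₂, by rw [← hmul_omul', e1m, e2m], by rw [← hmul_omul', e1n, e2n]⟩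

end Aux

/-- `𝒞` is closed under (left-to-right) composition, with
`(fg)^ = f̂ ∘ (_{f̄} ĝ)` and `(fg)‾ = (f̄)ĝ · ḡ`; moreover each `f ∈ 𝒞` satisfies the
wreath-like identity `(b⃗·a⃗)f = b⃗(_{a⃗}f̂) · (a⃗f)`, i.e. `F (a ++ b) = F a ++ (_a f̂)(b)`. -/
theorem stmt_19 {S : Type*} [Semigroup S] [Fintype S] :
    (∀ F G : List S → List S, F ∈ Ccal S → G ∈ Ccal S → (fun l => G (F l)) ∈ Ccal S) ∧
    (∀ (F G Fh Gh : List S → List S) (fb gb : List S),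
      Fh ∈ Swr0 S → Gh ∈ Swr0 S → fb ≠ [] → gb ≠ [] →
      (∀ l, F l = fb ++ Fh l) → (∀ l, G l = gb ++ Gh l) →
      (∀ l, G (F l) = (gb ++ Gh fb) ++ sect Gh fb (Fh l)) ∧
        (fun l => sect Gh fb (Fh l)) ∈ Swr0 S) ∧
    (∀ (F Fh : List S → List S) (fb : List S), Fh ∈ Swr0 S → (∀ l, F l = fb ++ Fh l) →
      ∀ a b : List S, F (a ++ b) = F a ++ sect Fh a b) := by
  have part2 : ∀ (F G Fh Gh : List S → List S) (fb gb : List S),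
      Fh ∈ Swr0 S → Gh ∈ Swr0 S → fb ≠ [] → gb ≠ [] →
      (∀ l, F l = fb ++ Fh l) → (∀ l, G l = gb ++ Gh l) →
      (∀ l, G (F l) = (gb ++ Gh fb) ++ sect Gh fb (Fh l)) ∧
        (fun l => sect Gh fb (Fh l)) ∈ Swr0 S := by
    intro F G Fh Gh fb gb hFh hGh _ _ hFd hGd
    constructor
    · intro l
      rw [hFd l, hGd (fb ++ Fh l), app_sect hGh.1 fb (Fh l), ← List.append_assoc]
    · exact ⟨inWr_comp hFh.1 (inWr_sect hGh.1 fb),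
        zeiger_comp hFh.1 (inWr_sect hGh.1 fb) hFh.2 (zeiger_sect hGh.1 hGh.2 fb)⟩
  refine ⟨?_, part2, ?_⟩
  · intro F G hF hG
    obtain ⟨Fh, hFh, fb, hfb, hfbc, hFd, hFc⟩ := hF
    obtain ⟨Gh, hGh, gb, hgb, hgbc, hGd, hGc⟩ := hG
    obtain ⟨heq, hwr⟩ := part2 F G Fh Gh fb gb hFh hGh hfb hgb hFd hGd
    refine ⟨fun l => sect Gh fb (Fh l), hwr, gb ++ Gh fb, by simp [hgb], ?_, heq,
      fun l hl => hGc (F l) (hFc l hl)⟩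
    · -- gb ++ Gh fb is a chain : it equals G (F [])
      have hFnil : Fh [] = [] := List.length_eq_zero_iff.mp (hFh.1.1 [])
      have h1 : F [] = fb := by rw [hFd, hFnil, List.append_nil]
      have h2 : G (F []) = gb ++ Gh fb := by rw [h1, hGd]
      have := hGc (F []) (by rw [h1]; exact hfbc)
      rwa [h2] at this
  · intro F Fh fb hFh hFd a b
    rw [hFd (a ++ b), hFd a, app_sect hFh.1 a b, List.append_assoc]
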